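/- Let d ≥ 1, K ≥ 0, and let φ : ℝ^d → ℝ be K-Lipschitz. Then for every ε > 0 and t > 0, the Cole–Hopf function u^ε_t is K-Lipschitz: |u^ε_t(x) − u^ε_t(z)| ≤ K‖x − z‖ for all x, z ∈ ℝ^d. -/

import Mathlib

/-!
Write `u = -ε log (c Z)` with `Z x = ∫ exp (-‖x - y‖² / (2εt) - φ y / ε) dy`. Since `φ` grows at
most linearly, the Gaussian factor makes `Z` finite. Shifting the integration variable by `x - z`
and using `φ (y + (x - z)) ≤ φ y + K‖x - z‖` gives `Z x ≥ exp (-K‖x - z‖ / ε) Z z`; taking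
logarithms, the constant `c` cancels and `u x ≤ u z + K‖x - z‖`.
-/

open MeasureTheory
noncomputable section

/-- The Cole–Hopf function. -/
def coleHopf {d : ℕ} (φ : EuclideanSpace ℝ (Fin d) → ℝ) (ε t : ℝ)
    (x : EuclideanSpace ℝ (Fin d)) : ℝ :=
  -ε * Real.log ((2 * Real.pi * ε * t) ^ (-(d : ℝ) / 2) *
    ∫ y : EuclideanSpace ℝ (Fin d),
      Real.exp (-‖x - y‖ ^ 2 / (2 * ε * t) - φ y / ε))

open Real

lemma neg_mul_sq_add_mul_le {a : ℝ} (ha : 0 < a) (r c : ℝ) :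
    -a * r ^ 2 + c * r ≤ -(a / 2) * r ^ 2 + c ^ 2 / (2 * a) := by
  have hsq : 0 ≤ (a * r - c) ^ 2 / (2 * a) := by positivity
  have hexp : (a * r - c) ^ 2 / (2 * a) = (a / 2) * r ^ 2 - c * r + c ^ 2 / (2 * a) := by
    field_simp
    ring
  linarith

section InnerProductSpace

variable {V : Type*} [NormedAddCommGroup V] [InnerProductSpace ℝ V] [FiniteDimensional ℝ V]
  [MeasurableSpace V] [BorelSpace V]

theorem integrable_exp_neg_mul_sq_norm {b : ℝ} (hb : 0 < b) :
    Integrable (fun v : V => exp (-b * ‖v‖ ^ 2)) := by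
  have h := (GaussianFourier.integrable_cexp_neg_mul_sq_norm_add (V := V) (b := (b : ℂ))
    (by simpa using hb) 0 0).re
  convert h using 2 with v
  rw [show -(b : ℂ) * ‖v‖ ^ 2 + 0 * ↑(inner ℝ (0 : V) v) = ((-b * ‖v‖ ^ 2 : ℝ) : ℂ) by
    push_cast; ring, ← Complex.ofReal_exp]
  exact (Complex.ofReal_re _).symm

def coleHopfIntegral (φ : V → ℝ) (ε t : ℝ) (x : V) : ℝ :=
  ∫ y, exp (-‖x - y‖ ^ 2 / (2 * ε * t) - φ y / ε)

variable {φ : V → ℝ} {L : NNReal} {ε t : ℝ}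

theorem integrable_coleHopfIntegrand (hφ : LipschitzWith L φ) (hε : 0 < ε) (ht : 0 < t) (x : V) :
    Integrable (fun y => exp (-‖x - y‖ ^ 2 / (2 * ε * t) - φ y / ε)) := by
  set a : ℝ := (2 * ε * t)⁻¹
  have ha : 0 < a := by positivity
  have hgauss : Integrable (fun y : V =>
      exp (L ^ 2 / ε ^ 2 / (2 * a) - φ x / ε) * exp (-(a / 2) * ‖x - y‖ ^ 2)) := by
    refine Integrable.const_mul ?_ _
    simpa using (integrable_exp_neg_mul_sq_norm (V := V) (half_pos ha)).comp_sub_left x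
  have hφc : Continuous φ := hφ.continuous
  refine hgauss.mono' (by fun_prop : Continuous _).aestronglyMeasurable
    (Filter.Eventually.of_forall fun y => ?_)
  rw [norm_of_nonneg (exp_pos _).le, ← exp_add, exp_le_exp]
  have hφxy : φ x ≤ φ y + L * ‖x - y‖ := by simpa [dist_eq_norm] using hφ.le_add_mul x y
  have hdiv : -‖x - y‖ ^ 2 / (2 * ε * t) - φ y / ε
      ≤ -a * ‖x - y‖ ^ 2 + L / ε * ‖x - y‖ - φ x / ε := by
    have hquad : -‖x - y‖ ^ 2 / (2 * ε * t) = -a * ‖x - y‖ ^ 2 := by ring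
    have hlin : φ x / ε - L / ε * ‖x - y‖ ≤ φ y / ε := by
      rw [div_mul_eq_mul_div, ← sub_div]
      gcongr
      linarith
    linarith
  have hcomplete := neg_mul_sq_add_mul_le ha ‖x - y‖ (L / ε)
  rw [div_pow] at hcomplete
  linarith

theorem coleHopfIntegral_pos (hφ : LipschitzWith L φ) (hε : 0 < ε) (ht : 0 < t) (x : V) :
    0 < coleHopfIntegral φ ε t x :=
  integral_exp_pos (integrable_coleHopfIntegrand hφ hε ht x)

theorem exp_mul_coleHopfIntegral_le (hφ : LipschitzWith L φ) (hε : 0 < ε) (ht : 0 < t)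
    (x z : V) :
    exp (-(L * dist x z) / ε) * coleHopfIntegral φ ε t z ≤ coleHopfIntegral φ ε t x := by
  have htranslate : coleHopfIntegral φ ε t x
      = ∫ y, exp (-‖x - (y + (x - z))‖ ^ 2 / (2 * ε * t) - φ (y + (x - z)) / ε) :=
    (integral_add_right_eq_self _ _).symm
  rw [htranslate, coleHopfIntegral, ← integral_const_mul]
  refine integral_mono ((integrable_coleHopfIntegrand hφ hε ht z).const_mul _)
    ((integrable_coleHopfIntegrand hφ hε ht x).comp_add_right (x - z)) fun y => ?_
  have hshift : x - (y + (x - z)) = z - y := by abel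
  have hφy : φ (y + (x - z)) ≤ φ y + L * dist x z := by
    simpa [dist_self_add_left, dist_eq_norm] using hφ.le_add_mul (y + (x - z)) y
  simp only [← exp_add, exp_le_exp, hshift]
  have hφyε : φ (y + (x - z)) / ε ≤ φ y / ε + L * dist x z / ε := by
    rw [← add_div]
    gcongr
  linarith [neg_div ε (L * dist x z : ℝ)]

end InnerProductSpace

variable {d : ℕ} {φ : EuclideanSpace ℝ (Fin d) → ℝ} {L : NNReal} {ε t : ℝ}

theorem coleHopf_le_add_mul (hφ : LipschitzWith L φ) (hε : 0 < ε) (ht : 0 < t)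
    (x z : EuclideanSpace ℝ (Fin d)) :
    coleHopf φ ε t x ≤ coleHopf φ ε t z + L * dist x z := by
  have hC : 0 < (2 * π * ε * t) ^ (-(d : ℝ) / 2) := by positivity
  have hZx := coleHopfIntegral_pos hφ hε ht x
  have hZz := coleHopfIntegral_pos hφ hε ht z
  have hlog := log_le_log (by positivity) (exp_mul_coleHopfIntegral_le hφ hε ht x z)
  rw [log_mul (exp_pos _).ne' hZz.ne', log_exp] at hlog
  change -ε * log (_ * coleHopfIntegral φ ε t x) ≤ -ε * log (_ * coleHopfIntegral φ ε t z) + _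
  rw [log_mul hC.ne' hZx.ne', log_mul hC.ne' hZz.ne']
  have hscale : ε * (-(L * dist x z) / ε) = -(L * dist x z) := by field_simp
  have hscaled := mul_le_mul_of_nonneg_left hlog hε.le
  rw [mul_add, hscale] at hscaled
  linarith

theorem LipschitzWith.coleHopf (hφ : LipschitzWith L φ) (hε : 0 < ε) (ht : 0 < t) :
    LipschitzWith L (coleHopf φ ε t) :=
  LipschitzWith.of_le_add_mul L (coleHopf_le_add_mul hφ hε ht)

theorem stmt3_general (d : ℕ) (K : ℝ) (hK : 0 ≤ K)
    (φ : EuclideanSpace ℝ (Fin d) → ℝ)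
    (hLip : ∀ y z, |φ y - φ z| ≤ K * ‖y - z‖)
    (ε : ℝ) (hε : 0 < ε) (t : ℝ) (ht : 0 < t) :
    ∀ x z : EuclideanSpace ℝ (Fin d),
      |coleHopf φ ε t x - coleHopf φ ε t z| ≤ K * ‖x - z‖ := by
  intro x z
  have hφ : LipschitzWith K.toNNReal φ :=
    LipschitzWith.of_dist_le' fun y z => by simpa [Real.dist_eq, dist_eq_norm] using hLip y z
  simpa [Real.dist_eq, dist_eq_norm, Real.coe_toNNReal K hK] using
    (hφ.coleHopf hε ht).dist_le_mul x z

theorem stmt3 (d : ℕ) (hd : 1 ≤ d) (K : ℝ) (hK : 0 ≤ K)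
    (φ : EuclideanSpace ℝ (Fin d) → ℝ)
    (hLip : ∀ y z, |φ y - φ z| ≤ K * ‖y - z‖)
    (ε : ℝ) (hε : 0 < ε) (t : ℝ) (ht : 0 < t) :
    ∀ x z : EuclideanSpace ℝ (Fin d),
      |coleHopf φ ε t x - coleHopf φ ε t z| ≤ K * ‖x - z‖ :=
  stmt3_general d K hK φ hLip ε hε t ht
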